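/- Let n ≥ 3, let a_0(n), a_1(n) be real numbers with 2a_0(n) + a_1(n) = 1, and let f : [0,1] → ℝ be bounded. Then ‖B_n^{M,1}(f) − f‖_∞ ≤ 2(3|a_1(n)| + 1)·ω₁(f; 1/√n), i.e. |B_n^{M,1}(f;x) − f(x)| ≤ 2(3|a_1(n)| + 1)·ω₁(f; 1/√n) for all x ∈ [0,1]. -/

import Mathlib

open scoped BigOperators
open Set Filter MeasureTheory

/-- Bernstein fundamental function `p_{n,k}` (vanishes for `k > n` since `choose = 0`). -/
noncomputable def bp (n k : ℕ) (x : ℝ) : ℝ :=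
  (n.choose k : ℝ) * x ^ k * (1 - x) ^ (n - k)

/-- Bernstein fundamental function with integer index, vanishing for negative `k`. -/
noncomputable def bpz (n : ℕ) (k : ℤ) (x : ℝ) : ℝ :=
  if 0 ≤ k then bp n k.toNat x else 0

/-- The classical Bernstein operator `B_n`. -/
noncomputable def Bern (n : ℕ) (f : ℝ → ℝ) (x : ℝ) : ℝ :=
  ∑ k ∈ Finset.range (n + 1), bp n k x * f (k / n)

/-- Modified fundamental function `p_{n,k}^{M,1}` with `a(x,n) = a1*x + a0`. -/
noncomputable def bpM1 (a0 a1 : ℝ) (n k : ℕ) (x : ℝ) : ℝ :=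
  (a1 * x + a0) * bp (n - 1) k x + (a1 * (1 - x) + a0) * bpz (n - 1) ((k : ℤ) - 1) x

/-- The modified Bernstein operator `B_n^{M,1}`. -/
noncomputable def BernM1 (a0 a1 : ℝ) (n : ℕ) (f : ℝ → ℝ) (x : ℝ) : ℝ :=
  ∑ k ∈ Finset.range (n + 1), bpM1 a0 a1 n k x * f (k / n)

/-- Second modified fundamental function `p_{n,k}^{M,2}`. -/
noncomputable def bpM2 (n k : ℕ) (x : ℝ) : ℝ :=
  ((n : ℝ) / 2 * x ^ 2 + (-1 - (n : ℝ) / 2) * x + 1) * bp (n - 2) k x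
    + (n : ℝ) * x * (1 - x) * bpz (n - 2) ((k : ℤ) - 1) x
    + ((n : ℝ) / 2 * x ^ 2 + (-(n : ℝ) / 2 + 1) * x) * bpz (n - 2) ((k : ℤ) - 2) x

/-- The second modified Bernstein operator `B_n^{M,2}`. -/
noncomputable def BernM2 (n : ℕ) (f : ℝ → ℝ) (x : ℝ) : ℝ :=
  ∑ k ∈ Finset.range (n + 1), bpM2 n k x * f (k / n)

/-- The Kantorovich operator `K_n`. -/
noncomputable def Kan (n : ℕ) (f : ℝ → ℝ) (x : ℝ) : ℝ :=
  ((n : ℝ) + 1) * ∑ k ∈ Finset.range (n + 1),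
    bp n k x * ∫ t in ((k : ℝ) / (n + 1))..(((k : ℝ) + 1) / (n + 1)), f t

/-- The modified Kantorovich operator `K_n^{M,1}`. -/
noncomputable def KanM1 (a0 a1 : ℝ) (n : ℕ) (f : ℝ → ℝ) (x : ℝ) : ℝ :=
  ((n : ℝ) + 1) * ∑ k ∈ Finset.range (n + 1),
    bpM1 a0 a1 n k x * ∫ t in ((k : ℝ) / (n + 1))..(((k : ℝ) + 1) / (n + 1)), f t

/-- The Durrmeyer operator `D_n`. -/
noncomputable def Dur (n : ℕ) (f : ℝ → ℝ) (x : ℝ) : ℝ :=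
  ((n : ℝ) + 1) * ∑ k ∈ Finset.range (n + 1),
    bp n k x * ∫ t in (0:ℝ)..1, bp n k t * f t

/-- The modified Durrmeyer operator `D_n^{M,1}`. -/
noncomputable def DurM1 (a0 a1 : ℝ) (n : ℕ) (f : ℝ → ℝ) (x : ℝ) : ℝ :=
  ((n : ℝ) + 1) * ∑ k ∈ Finset.range (n + 1),
    bpM1 a0 a1 n k x * ∫ t in (0:ℝ)..1, bp n k t * f t

/-- The genuine Bernstein–Durrmeyer operator `U_n`. -/
noncomputable def Gen (n : ℕ) (f : ℝ → ℝ) (x : ℝ) : ℝ :=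
  (1 - x) ^ n * f 0 + x ^ n * f 1 +
    ((n : ℝ) - 1) * ∑ k ∈ Finset.Icc 1 (n - 1),
      bp n k x * ∫ t in (0:ℝ)..1, bp (n - 2) (k - 1) t * f t

/-- The modified genuine Bernstein–Durrmeyer operator `U_n^{M,1}`. -/
noncomputable def GenM1 (a0 a1 : ℝ) (n : ℕ) (f : ℝ → ℝ) (x : ℝ) : ℝ :=
  (a1 * x + a0) * (1 - x) ^ (n - 1) * f 0 + (a1 * (1 - x) + a0) * x ^ (n - 1) * f 1 +
    ((n : ℝ) - 1) * ∑ k ∈ Finset.Icc 1 (n - 1),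
      bpM1 a0 a1 n k x * ∫ t in (0:ℝ)..1, bp (n - 2) (k - 1) t * f t

/-- First modulus of continuity on `[0,1]`. -/
noncomputable def omega1 (f : ℝ → ℝ) (δ : ℝ) : ℝ :=
  sSup {y | ∃ s t : ℝ, s ∈ Icc (0:ℝ) 1 ∧ t ∈ Icc (0:ℝ) 1 ∧ |s - t| ≤ δ ∧ y = |f s - f t|}

/-- Second modulus of smoothness on `[0,1]`. -/
noncomputable def omega2 (f : ℝ → ℝ) (δ : ℝ) : ℝ :=
  sSup {y | ∃ t h : ℝ, 0 < h ∧ h ≤ δ ∧ t - h ∈ Icc (0:ℝ) 1 ∧ t + h ∈ Icc (0:ℝ) 1 ∧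
    y = |f (t + h) - 2 * f t + f (t - h)|}

/-- Sup norm on `[0,1]`. -/
noncomputable def supNorm (g : ℝ → ℝ) : ℝ :=
  sSup {y | ∃ t ∈ Icc (0:ℝ) 1, y = |g t|}

/-!
Write `n = m + 1`. Since `2 a₀ + a₁ = 1`, `B_n^{M,1} f (x)` is the affine combination
`A S₀ + B S₁`, with `A = a(x,n)`, `B = a(1-x,n)`, `A + B = 1` and `|A|, |B| ≤ (|a₁| + 1) / 2`,
of the two Bernstein means `S_e = ∑ₖ p_{m,k}(x) f((k + e)/n)`, `e ∈ {0, 1}`.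
Each `S_e` lies within `2 ω₁(f; 1/√n)` of `f x`: combine the Shisha–Mond bound
`|f s - f x| ≤ (1 + (s - x)² / δ²) ω₁(f; δ)` with the second moment
`∑ₖ p_{m,k}(x) ((k + e)/n - x)² = (m x (1 - x) + (e - x)²) / n² ≤ 1 / n`.
-/

lemma bp_eq_eval (m k : ℕ) (x : ℝ) : bp m k x = (bernsteinPolynomial ℝ m k).eval x := by
  simp [bp, bernsteinPolynomial]

lemma bp_nonneg (m k : ℕ) {x : ℝ} (hx : x ∈ Icc (0:ℝ) 1) : 0 ≤ bp m k x := by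
  have h0 : 0 ≤ x := hx.1
  have h1 : 0 ≤ 1 - x := sub_nonneg.mpr hx.2
  unfold bp
  positivity

lemma sum_bp (m : ℕ) (x : ℝ) : ∑ k ∈ Finset.range (m + 1), bp m k x = 1 := by
  simpa [bp_eq_eval, Polynomial.eval_finsetSum] using
    congrArg (Polynomial.eval x) (bernsteinPolynomial.sum ℝ m)

lemma sum_bp_mul_sub (m : ℕ) (x : ℝ) :
    ∑ k ∈ Finset.range (m + 1), bp m k x * (k - m * x) = 0 := by
  have h := congrArg (Polynomial.eval x) (bernsteinPolynomial.sum_smul ℝ m)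
  simp only [Polynomial.eval_finsetSum, nsmul_eq_mul, Polynomial.eval_mul,
    Polynomial.eval_natCast, Polynomial.eval_X, ← bp_eq_eval] at h
  calc ∑ k ∈ Finset.range (m + 1), bp m k x * (k - m * x)
      = ∑ k ∈ Finset.range (m + 1), (k : ℝ) * bp m k x
          - m * x * ∑ k ∈ Finset.range (m + 1), bp m k x := by
        rw [Finset.mul_sum, ← Finset.sum_sub_distrib]
        exact Finset.sum_congr rfl fun _ _ => by ring
    _ = 0 := by rw [h, sum_bp]; ring

lemma sum_bp_mul_sq_sub (m : ℕ) (x : ℝ) :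
    ∑ k ∈ Finset.range (m + 1), bp m k x * (k - m * x) ^ 2 = m * x * (1 - x) := by
  have h := congrArg (Polynomial.eval x) (bernsteinPolynomial.variance ℝ m)
  simp only [Polynomial.eval_finsetSum, Polynomial.eval_mul, Polynomial.eval_pow,
    Polynomial.eval_sub, nsmul_eq_mul, Polynomial.eval_X,
    Polynomial.eval_natCast, Polynomial.eval_one, ← bp_eq_eval] at h
  rw [← h]
  refine Finset.sum_congr rfl fun k _ => ?_
  ring

lemma sum_bp_mul_sq_shift_sub (m : ℕ) (x e : ℝ) :
    ∑ k ∈ Finset.range (m + 1), bp m k x * ((k + e) / (m + 1) - x) ^ 2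
      = (m * x * (1 - x) + (e - x) ^ 2) / (m + 1) ^ 2 := by
  calc ∑ k ∈ Finset.range (m + 1), bp m k x * ((k + e) / (m + 1) - x) ^ 2
      = ∑ k ∈ Finset.range (m + 1), (bp m k x * (k - m * x) ^ 2
          + 2 * (e - x) * (bp m k x * (k - m * x)) + (e - x) ^ 2 * bp m k x) / (m + 1) ^ 2 := by
        refine Finset.sum_congr rfl fun k _ => ?_
        field_simp
        ring
    _ = (∑ k ∈ Finset.range (m + 1), bp m k x * (k - m * x) ^ 2
          + 2 * (e - x) * ∑ k ∈ Finset.range (m + 1), bp m k x * (k - m * x)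
          + (e - x) ^ 2 * ∑ k ∈ Finset.range (m + 1), bp m k x) / (m + 1) ^ 2 := by
        rw [← Finset.sum_div, Finset.sum_add_distrib, Finset.sum_add_distrib, Finset.mul_sum,
          Finset.mul_sum]
    _ = _ := by rw [sum_bp_mul_sq_sub, sum_bp_mul_sub, sum_bp]; ring

lemma sum_bp_mul_sq_shift_sub_le (m : ℕ) {x e : ℝ} (hx : x ∈ Icc (0:ℝ) 1)
    (he : e ∈ Icc (0:ℝ) 1) :
    ∑ k ∈ Finset.range (m + 1), bp m k x * ((k + e) / (m + 1) - x) ^ 2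
      ≤ 1 / ((m:ℝ) + 1) := by
  rw [sum_bp_mul_sq_shift_sub, div_le_div_iff₀ (by positivity) (by positivity)]
  obtain ⟨hx0, hx1⟩ := hx
  obtain ⟨he0, he1⟩ := he
  have hvar : x * (1 - x) ≤ 1 := by nlinarith
  have hshift : (e - x) ^ 2 ≤ 1 := by nlinarith
  nlinarith [mul_le_mul_of_nonneg_left hvar (Nat.cast_nonneg m : (0:ℝ) ≤ m)]

lemma bernM1_succ (a0 a1 : ℝ) (m : ℕ) (f : ℝ → ℝ) (x : ℝ) :
    BernM1 a0 a1 (m + 1) f x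
      = (a1 * x + a0) * ∑ k ∈ Finset.range (m + 1), bp m k x * f (k / (m + 1))
        + (a1 * (1 - x) + a0)
          * ∑ k ∈ Finset.range (m + 1), bp m k x * f ((k + 1) / (m + 1)) := by
  have hlow : ∑ k ∈ Finset.range (m + 2), bp m k x * f (k / (m + 1))
      = ∑ k ∈ Finset.range (m + 1), bp m k x * f (k / (m + 1)) := by
    rw [Finset.sum_range_succ, bp, Nat.choose_eq_zero_of_lt (Nat.lt_succ_self m)]
    simp
  have hup : ∑ k ∈ Finset.range (m + 2), bpz m ((k : ℤ) - 1) x * f (k / (m + 1))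
      = ∑ k ∈ Finset.range (m + 1), bp m k x * f ((k + 1) / (m + 1)) := by
    rw [Finset.sum_range_succ']
    simp [bpz]
  simp only [BernM1, bpM1, add_mul, mul_assoc, Finset.sum_add_distrib, ← Finset.mul_sum,
    Nat.cast_add, Nat.cast_one, add_tsub_cancel_right, hlow, hup]

lemma abs_mul_add_le_of_two_mul_add_eq_one {a0 a1 x : ℝ} (ha : 2 * a0 + a1 = 1)
    (hx : x ∈ Icc (0:ℝ) 1) : |a1 * x + a0| ≤ (|a1| + 1) / 2 := by
  have hx' : |x - 1 / 2| ≤ 1 / 2 := abs_le.mpr ⟨by linarith [hx.1], by linarith [hx.2]⟩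
  calc |a1 * x + a0| = |a1 * (x - 1 / 2) + 1 / 2| := by congr 1; linarith
    _ ≤ |a1| * |x - 1 / 2| + 1 / 2 := by
        simpa [abs_mul] using abs_add_le (a1 * (x - 1 / 2)) (1 / 2)
    _ ≤ (|a1| + 1) / 2 := by nlinarith [abs_nonneg a1]

section

variable {f : ℝ → ℝ}

lemma bddAbove_omega1_set (hf : ∃ M, ∀ t ∈ Icc (0:ℝ) 1, |f t| ≤ M) (δ : ℝ) :
    BddAbove {y | ∃ s t : ℝ, s ∈ Icc (0:ℝ) 1 ∧ t ∈ Icc (0:ℝ) 1 ∧ |s - t| ≤ δ ∧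
      y = |f s - f t|} := by
  obtain ⟨M, hM⟩ := hf
  refine ⟨2 * M, ?_⟩
  rintro y ⟨s, t, hs, ht, -, rfl⟩
  linarith [abs_sub (f s) (f t), hM s hs, hM t ht]

lemma abs_sub_le_omega1 (hf : ∃ M, ∀ t ∈ Icc (0:ℝ) 1, |f t| ≤ M) {δ s t : ℝ}
    (hs : s ∈ Icc (0:ℝ) 1) (ht : t ∈ Icc (0:ℝ) 1) (hst : |s - t| ≤ δ) :
    |f s - f t| ≤ omega1 f δ :=
  le_csSup (bddAbove_omega1_set hf δ) ⟨s, t, hs, ht, hst, rfl⟩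

lemma omega1_nonneg (hf : ∃ M, ∀ t ∈ Icc (0:ℝ) 1, |f t| ≤ M) {δ : ℝ}
    (hδ : 0 ≤ δ) : 0 ≤ omega1 f δ :=
  (abs_nonneg _).trans <| abs_sub_le_omega1 hf (left_mem_Icc.mpr zero_le_one)
    (left_mem_Icc.mpr zero_le_one) (by simpa using hδ)

lemma abs_sub_le_nat_mul_omega1 (hf : ∃ M, ∀ t ∈ Icc (0:ℝ) 1, |f t| ≤ M)
    {δ s : ℝ} (hs : s ∈ Icc (0:ℝ) 1) (N : ℕ) {t : ℝ} (ht : t ∈ Icc (0:ℝ) 1)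
    (hst : |s - t| ≤ N * δ) : |f s - f t| ≤ N * omega1 f δ := by
  induction N generalizing t with
  | zero =>
    rw [Nat.cast_zero, zero_mul, abs_nonpos_iff, sub_eq_zero] at hst
    simp [hst]
  | succ N ih =>
    have hN : (0:ℝ) < N + 1 := by positivity
    set u := t + (1 / (N + 1) : ℝ) • (s - t)
    have hu : u ∈ Icc (0:ℝ) 1 :=
      (convex_Icc 0 1).add_smul_sub_mem ht hs
        ⟨by positivity, div_le_one_of_le₀ (by simp) hN.le⟩
    have hsu : |s - u| ≤ N * δ := by
      have : s - u = N / (N + 1) * (s - t) := by simp only [u, smul_eq_mul]; field_simp; ring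
      rw [this, abs_mul, abs_of_nonneg (by positivity), div_mul_eq_mul_div, div_le_iff₀ hN]
      push_cast at hst
      nlinarith [Nat.cast_nonneg (α := ℝ) N]
    have hut : |u - t| ≤ δ := by
      have : u - t = (s - t) / (N + 1) := by simp only [u, smul_eq_mul]; ring
      rw [this, abs_div, abs_of_pos hN, div_le_iff₀ hN]
      push_cast at hst
      linarith
    calc |f s - f t| ≤ |f s - f u| + |f u - f t| := abs_sub_le _ _ _
      _ ≤ N * omega1 f δ + omega1 f δ := add_le_add (ih hu hsu) (abs_sub_le_omega1 hf hu ht hut)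
      _ = (N + 1 : ℕ) * omega1 f δ := by push_cast; ring

lemma natCeil_le_one_add_sq {r : ℝ} (hr : 0 ≤ r) : (⌈r⌉₊ : ℝ) ≤ 1 + r ^ 2 := by
  rcases le_or_gt r 1 with h | h
  · have : ⌈r⌉₊ ≤ 1 := Nat.ceil_le.mpr (by simpa using h)
    have : (⌈r⌉₊ : ℝ) ≤ 1 := by exact_mod_cast this
    nlinarith
  · nlinarith [Nat.ceil_lt_add_one hr]

lemma abs_sub_le_one_add_sq_div_mul_omega1 (hf : ∃ M, ∀ t ∈ Icc (0:ℝ) 1, |f t| ≤ M)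
    {δ s t : ℝ} (hδ : 0 < δ) (hs : s ∈ Icc (0:ℝ) 1) (ht : t ∈ Icc (0:ℝ) 1) :
    |f s - f t| ≤ (1 + (s - t) ^ 2 / δ ^ 2) * omega1 f δ := by
  have hr : 0 ≤ |s - t| / δ := by positivity
  have hceil : (⌈|s - t| / δ⌉₊ : ℝ) ≤ 1 + (s - t) ^ 2 / δ ^ 2 := by
    simpa [div_pow] using natCeil_le_one_add_sq hr
  calc |f s - f t| ≤ ⌈|s - t| / δ⌉₊ * omega1 f δ :=
        abs_sub_le_nat_mul_omega1 hf hs _ ht ((div_le_iff₀ hδ).mp (Nat.le_ceil _))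
    _ ≤ _ := mul_le_mul_of_nonneg_right hceil (omega1_nonneg hf hδ.le)

lemma abs_sum_mul_sub_le_two_mul_omega1 {ι : Type*} {s : Finset ι} {w y : ι → ℝ}
    (hf : ∃ M, ∀ t ∈ Icc (0:ℝ) 1, |f t| ≤ M) {δ x : ℝ} (hδ : 0 < δ)
    (hx : x ∈ Icc (0:ℝ) 1) (hw : ∀ i ∈ s, 0 ≤ w i) (hw1 : ∑ i ∈ s, w i = 1)
    (hy : ∀ i ∈ s, y i ∈ Icc (0:ℝ) 1) (hvar : ∑ i ∈ s, w i * (y i - x) ^ 2 ≤ δ ^ 2) :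
    |∑ i ∈ s, w i * f (y i) - f x| ≤ 2 * omega1 f δ := by
  have hsub : ∑ i ∈ s, w i * f (y i) - f x = ∑ i ∈ s, w i * (f (y i) - f x) := by
    simp only [mul_sub, Finset.sum_sub_distrib, ← Finset.sum_mul, hw1, one_mul]
  calc |∑ i ∈ s, w i * f (y i) - f x|
      ≤ ∑ i ∈ s, |w i * (f (y i) - f x)| := hsub ▸ Finset.abs_sum_le_sum_abs _ _
    _ ≤ ∑ i ∈ s, w i * ((1 + (y i - x) ^ 2 / δ ^ 2) * omega1 f δ) := by
        refine Finset.sum_le_sum fun i hi => ?_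
        rw [abs_mul, abs_of_nonneg (hw i hi)]
        exact mul_le_mul_of_nonneg_left
          (abs_sub_le_one_add_sq_div_mul_omega1 hf hδ (hy i hi) hx) (hw i hi)
    _ = ∑ i ∈ s, (w i * omega1 f δ + w i * (y i - x) ^ 2 * (omega1 f δ / δ ^ 2)) :=
        Finset.sum_congr rfl fun _ _ => by field_simp
    _ = omega1 f δ + (∑ i ∈ s, w i * (y i - x) ^ 2) * (omega1 f δ / δ ^ 2) := by
        rw [Finset.sum_add_distrib, ← Finset.sum_mul, ← Finset.sum_mul, hw1, one_mul]
    _ ≤ omega1 f δ + δ ^ 2 * (omega1 f δ / δ ^ 2) := by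
        have := omega1_nonneg hf hδ.le
        gcongr
    _ = 2 * omega1 f δ := by field_simp; ring

lemma abs_sum_bp_mul_shift_sub_le (hf : ∃ M, ∀ t ∈ Icc (0:ℝ) 1, |f t| ≤ M)
    (m : ℕ) {x e : ℝ} (hx : x ∈ Icc (0:ℝ) 1) (he : e ∈ Icc (0:ℝ) 1) :
    |∑ k ∈ Finset.range (m + 1), bp m k x * f ((k + e) / (m + 1)) - f x|
      ≤ 2 * omega1 f (1 / Real.sqrt (m + 1)) := by
  have hm : (0:ℝ) < m + 1 := by positivity
  refine abs_sum_mul_sub_le_two_mul_omega1 hf (by positivity) hx (fun k _ => bp_nonneg m k hx)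
    (sum_bp m x) (fun k hk => ⟨by have := he.1; positivity, ?_⟩) ?_
  · have hk : (k : ℝ) + 1 ≤ m + 1 := by exact_mod_cast Finset.mem_range.mp hk
    rw [div_le_one hm]
    linarith [he.2]
  · rw [div_pow, one_pow, Real.sq_sqrt hm.le]
    exact sum_bp_mul_sq_shift_sub_le m hx he

lemma abs_bernM1_sub_le (hf : ∃ M, ∀ t ∈ Icc (0:ℝ) 1, |f t| ≤ M)
    {a0 a1 : ℝ} (ha : 2 * a0 + a1 = 1) (m : ℕ) {x : ℝ} (hx : x ∈ Icc (0:ℝ) 1) :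
    |BernM1 a0 a1 (m + 1) f x - f x| ≤ 2 * (|a1| + 1) * omega1 f (1 / Real.sqrt (m + 1)) := by
  set ω := omega1 f (1 / Real.sqrt (m + 1))
  set S₀ := ∑ k ∈ Finset.range (m + 1), bp m k x * f (k / (m + 1))
  set S₁ := ∑ k ∈ Finset.range (m + 1), bp m k x * f ((k + 1) / (m + 1))
  have hS₀ : |S₀ - f x| ≤ 2 * ω := by
    simpa only [add_zero] using abs_sum_bp_mul_shift_sub_le hf m hx (left_mem_Icc.mpr zero_le_one)
  have hS₁ : |S₁ - f x| ≤ 2 * ω :=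
    abs_sum_bp_mul_shift_sub_le hf m hx (right_mem_Icc.mpr zero_le_one)
  have hA := abs_mul_add_le_of_two_mul_add_eq_one ha hx
  have hB := abs_mul_add_le_of_two_mul_add_eq_one ha (x := 1 - x)
    ⟨by linarith [hx.2], by linarith [hx.1]⟩
  have hdecomp : BernM1 a0 a1 (m + 1) f x - f x
      = (a1 * x + a0) * (S₀ - f x) + (a1 * (1 - x) + a0) * (S₁ - f x) := by
    rw [bernM1_succ]
    linear_combination (f x) * ha
  calc |BernM1 a0 a1 (m + 1) f x - f x|
      ≤ |a1 * x + a0| * |S₀ - f x| + |a1 * (1 - x) + a0| * |S₁ - f x| := by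
        rw [hdecomp, ← abs_mul, ← abs_mul]
        exact abs_add_le _ _
    _ ≤ (|a1| + 1) / 2 * (2 * ω) + (|a1| + 1) / 2 * (2 * ω) := by
        gcongr
    _ = 2 * (|a1| + 1) * ω := by ring

end

/-- uniform estimate for `B_n^{M,1}` for bounded `f`. -/
theorem stmt4 (n : ℕ) (hn : 3 ≤ n) (a0 a1 : ℝ) (ha : 2 * a0 + a1 = 1)
    (f : ℝ → ℝ) (hb : ∃ M : ℝ, ∀ t ∈ Icc (0:ℝ) 1, |f t| ≤ M) :
    ∀ x ∈ Icc (0:ℝ) 1,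
      |BernM1 a0 a1 n f x - f x| ≤
        2 * (3 * |a1| + 1) * omega1 f (1 / Real.sqrt n) := by
  intro x hx
  obtain ⟨m, rfl⟩ : ∃ m, n = m + 1 := ⟨n - 1, by omega⟩
  have hω := omega1_nonneg hb (δ := 1 / Real.sqrt (m + 1)) (by positivity)
  calc |BernM1 a0 a1 (m + 1) f x - f x|
      ≤ 2 * (|a1| + 1) * omega1 f (1 / Real.sqrt (m + 1)) := abs_bernM1_sub_le hb ha m hx
    _ ≤ 2 * (3 * |a1| + 1) * omega1 f (1 / Real.sqrt ((m + 1 : ℕ) : ℝ)) := by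
        push_cast
        gcongr
        linarith [abs_nonneg a1]
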